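/- Let A = (Q, q₀, F, Δ) be a finite automaton over Σ_k^m, and let det(A) be its determinization: the automaton over Σ_k^m whose states are the subsets H ⊆ Q, with initial state {q₀} and transitions (H, a⃗, H') exactly when H' = {q' ∈ Q : ∃ q ∈ H, (q, a⃗, q') ∈ Δ}. Then for all x⃗ ∈ ℕ^m, n ∈ ℕ and q ∈ Q: W_{A,q}(x⃗, n) holds if and only if there exists a subset H ⊆ Q with q ∈ H and W_{det(A),H}(x⃗, n). -/

import Mathlib

/-!
Condition (a) says that the digits of the `w_q` at position `i` single out one state `s i`, so
`W_{A,q}(x⃗, n)` just says that some sequence of states `q₀ = s 0, …, s n = q` follows the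
transitions of `A` along the digits of `x⃗`. In `det(A)` the letter read at each position is
forced by `x⃗`, so its only run is the sequence of sets of states reachable by `A`. Hence
`W_{det(A),H}(x⃗, n)` holds exactly when `H` is the set of states `A` can reach after `n` steps.
-/
/-- The `i`-th base-`k` digit of `x`. -/
def digit (k x i : ℕ) : ℕ := x / k ^ i % k

/-- A finite automaton over the alphabet `Σ_k^m = (Fin k)^m`. -/
structure FA (k m : ℕ) where
  Q : Type
  fin : Finite Q
  q0 : Q
  acc : Set Q
  δ : Set (Q × (Fin m → Fin k) × Q)

/-- The run predicate `W_{A,q₁}(x⃗, n)`: the automaton `A` can reach state `q₁`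
after reading the first `n` base-`k` digits of `x⃗`, the run being encoded by a
family `(w_q)` of natural numbers. -/
def FA.W {k m : ℕ} (A : FA k m) (q1 : A.Q) (x : Fin m → ℕ) (n : ℕ) : Prop :=
  ∃ w : A.Q → ℕ,
    (∀ q, w q < k ^ (n + 1)) ∧
    (∀ i ≤ n, ∃ q, digit k (w q) i = 1 ∧ ∀ q' ≠ q, digit k (w q') i = 0) ∧
    digit k (w A.q0) 0 = 1 ∧ digit k (w q1) n = 1 ∧
    ∀ i < n, ∀ q, digit k (w q) i = 1 →
      ∃ a : Fin m → Fin k, ∃ q', (q, a, q') ∈ A.δ ∧ digit k (w q') (i + 1) = 1 ∧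
        ∀ j, digit k (x j) i = (a j : ℕ)

/-- The determinization of `A`: states are subsets of `A.Q`, initial state
`{q₀}`, and `(H, a⃗, H')` is a transition exactly when
`H' = {q' | ∃ q ∈ H, (q, a⃗, q') ∈ Δ}`. -/
def FA.det {k m : ℕ} (A : FA k m) : FA k m where
  Q := Set A.Q
  fin := by have := A.fin; infer_instance
  q0 := {A.q0}
  acc := {H | ∃ q ∈ H, q ∈ A.acc}
  δ := {t | t.2.2 = {q' | ∃ q ∈ t.1, (q, t.2.1, q') ∈ A.δ}}

lemma digit_ofDigits {k : ℕ} (hk : 0 < k) {L : List ℕ} (hL : ∀ l ∈ L, l < k) (i : ℕ) :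
    digit k (Nat.ofDigits k L) i = L.getD i 0 := by
  induction L generalizing i with
  | nil => simp [digit]
  | cons a L ih =>
    have ha : a < k := hL a List.mem_cons_self
    cases i with
    | zero => simp [digit, Nat.ofDigits_cons, Nat.add_mul_mod_self_left, Nat.mod_eq_of_lt ha]
    | succ i =>
      have hdiv : (a + k * Nat.ofDigits k L) / k = Nat.ofDigits k L := by
        rw [Nat.add_mul_div_left _ _ hk, Nat.div_eq_of_lt ha, zero_add]
      rw [List.getD_cons_succ, ← ih (fun l hl => hL l (List.mem_cons_of_mem a hl))]
      simp only [digit, Nat.ofDigits_cons, pow_succ', ← Nat.div_div_eq_div_mul, hdiv]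

lemma existsUnique_digits_eq {k m : ℕ} (hk : 0 < k) (x : Fin m → ℕ) (i : ℕ) :
    ∃! a : Fin m → Fin k, ∀ j, digit k (x j) i = a j :=
  ⟨fun j => ⟨digit k (x j) i, Nat.mod_lt _ hk⟩, fun _ => rfl,
    fun _ ha => funext fun j => Fin.ext (ha j).symm⟩

namespace FA

variable {k m : ℕ} (A : FA k m)

def Step (x : Fin m → ℕ) (i : ℕ) (q q' : A.Q) : Prop :=
  ∃ a : Fin m → Fin k, (q, a, q') ∈ A.δ ∧ ∀ j, digit k (x j) i = a j

def Reaches (q : A.Q) (x : Fin m → ℕ) (n : ℕ) : Prop :=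
  ∃ s : ℕ → A.Q, s 0 = A.q0 ∧ s n = q ∧ ∀ i < n, A.Step x i (s i) (s (i + 1))

variable {A}

lemma step_iff_mem_δ {x : Fin m → ℕ} {i : ℕ} {a : Fin m → Fin k}
    (ha : ∀ j, digit k (x j) i = a j) {q q' : A.Q} :
    A.Step x i q q' ↔ (q, a, q') ∈ A.δ := by
  refine ⟨fun ⟨b, hb, hbx⟩ => ?_, fun h => ⟨a, h, ha⟩⟩
  obtain rfl : b = a := funext fun j => Fin.ext ((hbx j).symm.trans (ha j))
  exact hb

lemma reaches_zero_iff {q : A.Q} {x : Fin m → ℕ} : A.Reaches q x 0 ↔ q = A.q0 :=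
  ⟨fun ⟨s, hs0, hsn, _⟩ => hsn ▸ hs0, fun h => ⟨fun _ => q, h, rfl, by simp⟩⟩

lemma reaches_succ_iff {q' : A.Q} {x : Fin m → ℕ} {n : ℕ} :
    A.Reaches q' x (n + 1) ↔ ∃ q, A.Reaches q x n ∧ A.Step x n q q' := by
  constructor
  · rintro ⟨s, hs0, hsn, hstep⟩
    exact ⟨s n, ⟨s, hs0, rfl, fun i hi => hstep i (by omega)⟩, hsn ▸ hstep n n.lt_succ_self⟩
  · rintro ⟨q, ⟨s, hs0, rfl, hstep⟩, hlast⟩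
    refine ⟨Function.update s (n + 1) q', by simp [hs0], by simp, fun i hi => ?_⟩
    rcases Nat.lt_succ_iff_lt_or_eq.1 hi with hi | rfl
    · simpa [Function.update_of_ne (show i ≠ n + 1 by omega),
        Function.update_of_ne (show i + 1 ≠ n + 1 by omega)] using hstep i hi
    · simpa [Function.update_of_ne (show i ≠ i + 1 by omega)] using hlast

lemma reaches_of_W {q : A.Q} {x : Fin m → ℕ} {n : ℕ} (h : A.W q x n) :
    A.Reaches q x n := by
  obtain ⟨w, -, hunique, hinit, hfinal, htrans⟩ := h
  have hstate : ∀ i, ∃ p, i ≤ n → digit k (w p) i = 1 ∧ ∀ q ≠ p, digit k (w q) i = 0 := by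
    intro i
    by_cases hi : i ≤ n
    · exact (hunique i hi).imp fun _ h _ => h
    · exact ⟨A.q0, fun h => absurd h hi⟩
  choose s hs using hstate
  have hs_iff : ∀ i ≤ n, ∀ q, digit k (w q) i = 1 ↔ q = s i := by
    intro i hi q
    refine ⟨fun h => by_contra fun hne => ?_, fun h => h ▸ (hs i hi).1⟩
    rw [(hs i hi).2 q hne] at h
    exact zero_ne_one h
  refine ⟨s, ((hs_iff 0 n.zero_le _).1 hinit).symm, ((hs_iff n le_rfl _).1 hfinal).symm,
    fun i hi => ?_⟩
  obtain ⟨a, q', hδ, hq', hx⟩ := htrans i hi (s i) (hs i hi.le).1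
  rw [(hs_iff (i + 1) hi q').1 hq'] at hδ
  exact ⟨a, hδ, hx⟩

lemma W_of_reaches {q : A.Q} {x : Fin m → ℕ} {n : ℕ} (hk : 2 ≤ k) (h : A.Reaches q x n) :
    A.W q x n := by
  classical
  obtain ⟨s, hs0, hsn, hstep⟩ := h
  -- digit `i` of `w p` records whether the run is in state `p` at time `i`
  let row : A.Q → List ℕ := fun p => (List.range (n + 1)).map fun i => if s i = p then 1 else 0
  have hrow : ∀ p, ∀ l ∈ row p, l < k := by
    intro p l hl
    obtain ⟨i, -, rfl⟩ := List.mem_map.1 hl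
    split <;> omega
  have hdigit : ∀ p i, digit k (Nat.ofDigits k (row p)) i = if i ≤ n ∧ s i = p then 1 else 0 := by
    intro p i
    rw [digit_ofDigits (by omega) (hrow p)]
    by_cases hi : i ≤ n
    · simp [row, hi, Nat.lt_succ_of_le hi]
    · simp [row, hi, show ¬ i < n + 1 by omega]
  refine ⟨fun p => Nat.ofDigits k (row p), fun p => ?_, fun i hi => ⟨s i, ?_, fun p hp => ?_⟩,
    ?_, ?_, fun i hi p hp => ?_⟩
  · simpa [row] using Nat.ofDigits_lt_base_pow_length (by omega) (hrow p)
  · simp [hdigit, hi]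
  · simp [hdigit, Ne.symm hp]
  · simp [hdigit, hs0]
  · simp [hdigit, hsn]
  · obtain ⟨-, rfl⟩ : i ≤ n ∧ s i = p := by
      by_contra hne
      simp [hdigit, hne] at hp
    obtain ⟨a, hδ, hx⟩ := hstep i hi
    exact ⟨a, s (i + 1), hδ, by simp [hdigit, hi], hx⟩

lemma W_iff_reaches {q : A.Q} {x : Fin m → ℕ} {n : ℕ} (hk : 2 ≤ k) :
    A.W q x n ↔ A.Reaches q x n :=
  ⟨reaches_of_W, W_of_reaches hk⟩

lemma det_step_iff {x : Fin m → ℕ} {i : ℕ} {H H' : Set A.Q} (hk : 0 < k) :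
    A.det.Step x i H H' ↔ H' = {q' | ∃ q ∈ H, A.Step x i q q'} := by
  obtain ⟨a, ha, ha_unique⟩ := existsUnique_digits_eq hk x i
  simp only [step_iff_mem_δ ha]
  constructor
  · rintro ⟨b, hb, hbx⟩
    obtain rfl := ha_unique b hbx
    exact hb
  · exact fun h => ⟨a, h, ha⟩

lemma det_reaches_iff {H : Set A.Q} {x : Fin m → ℕ} {n : ℕ} (hk : 0 < k) :
    A.det.Reaches H x n ↔ H = {q | A.Reaches q x n} := by
  induction n generalizing H with
  | zero =>
    rw [show {q | A.Reaches q x 0} = {A.q0} from Set.ext fun _ => reaches_zero_iff]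
    exact reaches_zero_iff (A := A.det)
  | succ n ih =>
    rw [show {q' | A.Reaches q' x (n + 1)} = {q' | ∃ q ∈ {q | A.Reaches q x n}, A.Step x n q q'}
      from Set.ext fun _ => reaches_succ_iff]
    refine (reaches_succ_iff (A := A.det)).trans ⟨?_, fun h => ⟨_, ih.2 rfl, (det_step_iff hk).2 h⟩⟩
    rintro ⟨G, hG, hstep⟩
    exact (det_step_iff hk).1 (ih.1 hG ▸ hstep)

lemma det_W_iff {H : Set A.Q} {x : Fin m → ℕ} {n : ℕ} (hk : 2 ≤ k) :
    A.det.W H x n ↔ H = {q | A.W q x n} := by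
  rw [show {q | A.W q x n} = {q | A.Reaches q x n} from Set.ext fun _ => W_iff_reaches hk]
  exact (W_iff_reaches hk).trans (det_reaches_iff (by omega))

end FA

theorem stmt12 (k m : ℕ) (hk : 2 ≤ k) (A : FA k m) :
    ∀ (x : Fin m → ℕ) (n : ℕ) (q : A.Q),
      A.W q x n ↔ ∃ H : Set A.Q, q ∈ H ∧ A.det.W H x n := by
  intro x n q
  simp only [FA.det_W_iff hk, exists_eq_right, Set.mem_ofPred_eq]
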